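/- Let p_Re, q_Re ∈ ℝ[X] with deg p_Re = n. The following are equivalent. (1) There exist polynomials p, q ∈ ℂ[X] whose coefficient-wise real parts are p_Re and q_Re respectively, and a sequence Φ = (φ_0, …, φ_n) ∈ ℝ^{n+1} such that for every x ∈ [−1, 1], the (0,0) entry of QSP(Φ, x) equals p(x) and the (1,0) entry of QSP(Φ, x) equals q(x)·√(1−x²). (2) (a) deg q_Re ≤ n − 1; (b) either p_Re is even and q_Re is odd, or p_Re is odd and q_Re is even (a polynomial r is even if r(−x) = r(x) for all x and odd if r(−x) = −r(x) for all x); and (c') for every x ∈ [−1, 1], p_Re(x)² + (1 − x²)·q_Re(x)² ≤ 1. -/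

import Mathlib

open Matrix Complex Polynomial

/-- The reflection matrix `R(x)` appearing in quantum signal processing. -/
noncomputable def Rmat (x : ℝ) : Matrix (Fin 2) (Fin 2) ℂ :=
  !![(x : ℂ), (Real.sqrt (1 - x ^ 2) : ℂ); (Real.sqrt (1 - x ^ 2) : ℂ), -(x : ℂ)]

/-- The phase matrix `diag(e^{iφ}, e^{-iφ})`. -/
noncomputable def phaseMat (φ : ℝ) : Matrix (Fin 2) (Fin 2) ℂ :=
  !![Complex.exp (φ * Complex.I), 0; 0, Complex.exp (-(φ * Complex.I))]

/-- The quantum signal processing matrix. -/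
noncomputable def QSP (n : ℕ) (Φ : ℕ → ℝ) (x : ℝ) : Matrix (Fin 2) (Fin 2) ℂ :=
  phaseMat (Φ 0) * ((List.range n).map (fun j => Rmat x * phaseMat (Φ (j + 1)))).prod

/-!
By induction on `n`, the QSP matrix of a phase sequence of length `n` is
`[[P, -(-1)ⁿ Q̄ √(1 - x²)], [Q √(1 - x²), (-1)ⁿ P̄]]` for complex polynomials with
`deg P ≤ n`, `deg Q < n`, parities `n` and `n + 1`, and `P P̄ + (1 - x²) Q Q̄ = 1`. Conversely, such
a pair can be peeled off one layer at a time: the norm identity forces `|lc P| = |lc Q|`, so a phase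
can be chosen to cancel the leading coefficients. Hence the achievable pairs are exactly these.

For the real parts, the conditions are necessary because `(Re p)² ≤ |p|²`. For sufficiency,
`1 - pRe² - (1 - x²) qRe²` is an even polynomial `E(x²)` with `E ≥ 0` on `[0, 1]`. Splitting `E`
into linear factors with roots outside `(0, 1)`, squares of linear factors, and quadratics without
real roots, each factor is of the form `b² + (1 - x²) c²` with `(b, c)` of the degrees and parities
above, and this form is closed under products. Then `p = pRe + i b`, `q = qRe + i c` is an
achievable pair.
-/

open ComplexConjugate

lemma neg_one_pow_sq {R : Type*} [Monoid R] [HasDistribNeg R] (n : ℕ) : ((-1 : R) ^ n) ^ 2 = 1 := by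
  rw [← pow_mul, mul_comm, pow_mul, neg_one_sq, one_pow]

namespace Polynomial

variable {R S : Type*} [CommRing R] [CommRing S] {m n k : ℕ} {p q : R[X]}

def HasParity (m : ℕ) (p : R[X]) : Prop := p.comp (-X) = (-1) ^ m * p

lemma hasParity_X : HasParity 1 (X : R[X]) := by simp [HasParity]

lemma hasParity_C (a : R) : HasParity 0 (C a) := by simp [HasParity]

lemma hasParity_one_sub_X_sq : HasParity 0 (1 - X ^ 2 : R[X]) := by simp [HasParity]

lemma hasParity_zero : HasParity m (0 : R[X]) := by simp [HasParity]

lemma hasParity_mod_two : HasParity (m % 2) p ↔ HasParity m p := by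
  rw [HasParity, HasParity, ← neg_one_pow_eq_pow_mod_two]

lemma hasParity_congr (h : m % 2 = n % 2) : HasParity m p ↔ HasParity n p := by
  rw [← hasParity_mod_two, h, hasParity_mod_two]

namespace HasParity

lemma mul (hp : HasParity m p) (hq : HasParity n q) : HasParity (m + n) (p * q) := by
  rw [HasParity, mul_comp, hp, hq, pow_add]; ring

lemma add (hp : HasParity m p) (hq : HasParity m q) : HasParity m (p + q) := by
  rw [HasParity, add_comp, hp, hq, mul_add]

lemma sub (hp : HasParity m p) (hq : HasParity m q) : HasParity m (p - q) := by
  rw [HasParity, sub_comp, hp, hq, mul_sub]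

lemma smul (a : R) (hp : HasParity m p) : HasParity m (a • p) := by
  rw [HasParity, smul_comp, hp, mul_smul_comm]

lemma neg_one_pow_mul (hp : HasParity m p) (k : ℕ) : HasParity m ((-1) ^ k * p) := by
  rw [HasParity, mul_comp, hp]; simp; ring

lemma map (f : R →+* S) (hp : HasParity m p) : HasParity m (p.map f) := by
  simpa [HasParity, map_comp] using congrArg (Polynomial.map f) hp

lemma eval_neg (hp : HasParity m p) (x : R) : p.eval (-x) = (-1) ^ m * p.eval x := by
  simpa using congrArg (eval x) hp

lemma coeff_eq_zero [IsDomain R] [CharZero R] (hp : HasParity m p) (hk : Odd (k + m)) :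
    p.coeff k = 0 := by
  have h : p.coeff k * (-1) ^ k = (-1) ^ m * p.coeff k := by
    have := congrArg (coeff · k) hp
    rwa [show (-X : R[X]) = C (-1) * X by simp, comp_C_mul_X_coeff,
      show ((-1 : R[X]) ^ m) = C ((-1) ^ m) by simp, coeff_C_mul] at this
  have hk' : (-1 : R) ^ k = -(-1) ^ m := by
    have := hk.neg_one_pow (α := R)
    rw [pow_add] at this
    linear_combination (-1 : R) ^ m * this - (-1 : R) ^ k * neg_one_pow_sq (R := R) m
  rw [hk'] at h
  exact self_eq_neg.mp <| by
    linear_combination (-(-1) ^ m : R) * h - 2 * p.coeff k * neg_one_pow_sq (R := R) m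

lemma degree_lt_of_coeff_eq_zero [IsDomain R] [CharZero R] (hp : HasParity m p)
    (hk : Odd (k + m)) (hdeg : p.degree < ↑(k + 2)) (hc : p.coeff (k + 1) = 0) :
    p.degree < k := by
  rw [degree_lt_iff_coeff_zero] at hdeg ⊢
  intro i hi
  obtain rfl | rfl | hi := (by omega : i = k ∨ i = k + 1 ∨ k + 2 ≤ i)
  · exact hp.coeff_eq_zero hk
  · exact hc
  · exact hdeg i hi

end HasParity

lemma hasParity_iff_eval_neg [IsDomain R] [Infinite R] :
    HasParity m p ↔ ∀ x, p.eval (-x) = (-1) ^ m * p.eval x :=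
  ⟨HasParity.eval_neg, fun h ↦ Polynomial.funext fun x ↦ by simpa using h x⟩

lemma coeff_neg_one_pow_mul (k : ℕ) (p : R[X]) (i : ℕ) :
    ((-1) ^ k * p).coeff i = (-1) ^ k * p.coeff i := by
  rw [← C_1, ← C_neg, ← C_pow, coeff_C_mul]

lemma coeff_one_sub_X_sq_mul (p : R[X]) (k : ℕ) :
    ((1 - X ^ 2) * p).coeff (k + 2) = p.coeff (k + 2) - p.coeff k := by
  rw [sub_mul, one_mul, coeff_sub, coeff_X_pow_mul]

lemma degree_neg_one_pow_mul (k : ℕ) (p : R[X]) : ((-1) ^ k * p).degree = p.degree := by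
  rcases neg_one_pow_eq_or R[X] k with h | h <;> simp [h]

lemma degree_one_sub_X_sq_mul_le (hq : q.degree < n) : ((1 - X ^ 2) * q).degree ≤ ↑(n + 1) :=
  calc ((1 - X ^ 2) * q).degree ≤ (1 - X ^ 2 : R[X]).degree + q.degree := degree_mul_le _ _
    _ ≤ 2 + q.degree := by gcongr; compute_degree
    _ = (q.degree + 1) + 1 := by rw [add_comm, add_assoc, one_add_one_eq_two]
    _ ≤ ↑(n + 1) := by
      push_cast
      gcongr
      exact Nat.WithBot.add_one_le_of_lt hq

lemma degree_one_sub_X_sq_mul_mul_le {c₁ c₂ : R[X]} {m₁ m₂ : ℕ} (h₁ : c₁.degree < m₁)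
    (h₂ : c₂.degree < m₂) : ((1 - X ^ 2) * (c₁ * c₂)).degree ≤ ↑(m₁ + m₂) :=
  calc ((1 - X ^ 2) * (c₁ * c₂)).degree ≤ ((1 - X ^ 2) * c₁).degree + c₂.degree := by
        rw [← mul_assoc]; exact degree_mul_le _ _
    _ ≤ ↑(m₁ + 1) + c₂.degree := by gcongr; exact degree_one_sub_X_sq_mul_le h₁
    _ ≤ ↑(m₁ + m₂) := by
      rw [Nat.cast_add, Nat.cast_add, Nat.cast_one, add_assoc, add_comm 1]
      gcongr
      exact Nat.WithBot.add_one_le_of_lt h₂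

lemma eval_nonneg_on_Icc_of_Ioo (f : ℝ[X]) {a b : ℝ} (hab : a < b)
    (h : ∀ y ∈ Set.Ioo a b, 0 ≤ f.eval y) : ∀ y ∈ Set.Icc a b, 0 ≤ f.eval y := fun _ hy ↦
  closure_minimal h (isClosed_le continuous_const f.continuous) (closure_Ioo hab.ne ▸ hy)

end Polynomial

section Shape

variable {R S : Type*} [CommRing R] [CommRing S] {n : ℕ}

structure IsQSPShape (n : ℕ) (P Q : R[X]) : Prop where
  degree_le : P.degree ≤ n
  degree_lt : Q.degree < n
  hasParity_left : HasParity n P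
  hasParity_right : HasParity (n + 1) Q

namespace IsQSPShape

variable {P Q P' Q' : R[X]}

lemma add (h : IsQSPShape n P Q) (h' : IsQSPShape n P' Q') :
    IsQSPShape n (P + P') (Q + Q') where
  degree_le := (degree_add_le _ _).trans (max_le h.degree_le h'.degree_le)
  degree_lt := (degree_add_le _ _).trans_lt (max_lt h.degree_lt h'.degree_lt)
  hasParity_left := h.hasParity_left.add h'.hasParity_left
  hasParity_right := h.hasParity_right.add h'.hasParity_right

lemma smul (a : R) (h : IsQSPShape n P Q) : IsQSPShape n (a • P) (a • Q) where
  degree_le := (degree_smul_le _ _).trans h.degree_le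
  degree_lt := (degree_smul_le _ _).trans_lt h.degree_lt
  hasParity_left := h.hasParity_left.smul a
  hasParity_right := h.hasParity_right.smul a

lemma map (f : R →+* S) (h : IsQSPShape n P Q) : IsQSPShape n (P.map f) (Q.map f) where
  degree_le := degree_map_le.trans h.degree_le
  degree_lt := degree_map_le.trans_lt h.degree_lt
  hasParity_left := h.hasParity_left.map f
  hasParity_right := h.hasParity_right.map f

lemma mul {m₁ m₂ : ℕ} {b₁ c₁ b₂ c₂ : R[X]} (h₁ : IsQSPShape m₁ b₁ c₁)
    (h₂ : IsQSPShape m₂ b₂ c₂) :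
    IsQSPShape (m₁ + m₂) (b₁ * b₂ - (1 - X ^ 2) * (c₁ * c₂)) (b₁ * c₂ + c₁ * b₂) where
  degree_le := by
    refine (degree_sub_le _ _).trans
      (max_le ?_ (degree_one_sub_X_sq_mul_mul_le h₁.degree_lt h₂.degree_lt))
    exact (degree_mul_le _ _).trans (by push_cast; exact add_le_add h₁.degree_le h₂.degree_le)
  degree_lt := by
    refine (degree_add_le _ _).trans_lt (max_lt ?_ ?_)
    · calc (b₁ * c₂).degree ≤ b₁.degree + c₂.degree := degree_mul_le _ _
        _ ≤ m₁ + c₂.degree := by gcongr; exact h₁.degree_le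
        _ < ↑(m₁ + m₂) := by
          rw [Nat.cast_add]; exact WithBot.add_lt_add_left WithBot.coe_ne_bot h₂.degree_lt
    · calc (c₁ * b₂).degree ≤ c₁.degree + b₂.degree := degree_mul_le _ _
        _ ≤ c₁.degree + m₂ := by gcongr; exact h₂.degree_le
        _ < ↑(m₁ + m₂) := by
          rw [Nat.cast_add]; exact WithBot.add_lt_add_right WithBot.coe_ne_bot h₁.degree_lt
  hasParity_left := (h₁.hasParity_left.mul h₂.hasParity_left).sub <|
    (hasParity_congr (by omega)).1 <|
      hasParity_one_sub_X_sq.mul (h₁.hasParity_right.mul h₂.hasParity_right)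
  hasParity_right :=
    ((hasParity_congr (by omega)).1 (h₁.hasParity_left.mul h₂.hasParity_right)).add
      ((hasParity_congr (by omega)).1 (h₁.hasParity_right.mul h₂.hasParity_left))

end IsQSPShape

lemma isQSPShape_C_zero (a : R) : IsQSPShape 0 (C a) 0 where
  degree_le := degree_C_le
  degree_lt := by simp
  hasParity_left := hasParity_C a
  hasParity_right := hasParity_zero

lemma isQSPShape_C_mul_X_C (a b : R) : IsQSPShape 1 (C a * X) (C b) where
  degree_le := degree_C_mul_X_le a
  degree_lt := degree_C_le.trans_lt (by norm_num)
  hasParity_left := by simpa using (hasParity_C a).mul hasParity_X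
  hasParity_right := (hasParity_congr (by norm_num)).1 (hasParity_C b)

lemma isQSPShape_C_mul_X_sq_add_C (a b c : R) :
    IsQSPShape 2 (C a * X ^ 2 + C b) (C c * X) where
  degree_le := (degree_add_le _ _).trans
    (max_le (degree_C_mul_X_pow_le 2 a) (degree_C_le.trans (by norm_num)))
  degree_lt := (degree_C_mul_X_le c).trans_lt (by norm_num)
  hasParity_left := by
    refine HasParity.add ?_ ((hasParity_congr (by norm_num)).1 (hasParity_C b))
    simpa [sq] using (hasParity_C a).mul (hasParity_X.mul hasParity_X)
  hasParity_right := (hasParity_congr (by norm_num)).1 ((hasParity_C c).mul hasParity_X)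

lemma IsQSPShape.hasParity_one_sub_sq_add {b c : R[X]} (h : IsQSPShape n b c) :
    HasParity 0 (1 - (b ^ 2 + (1 - X ^ 2) * c ^ 2)) := by
  have hb : HasParity (n + n) (b ^ 2) := by rw [sq]; exact h.hasParity_left.mul h.hasParity_left
  have hc : HasParity (0 + (n + 1 + (n + 1))) ((1 - X ^ 2) * c ^ 2) := by
    rw [pow_two c]; exact hasParity_one_sub_X_sq.mul (h.hasParity_right.mul h.hasParity_right)
  exact (by simpa using hasParity_C (1 : R) : HasParity 0 (1 : R[X])).sub
    (((hasParity_congr (by omega)).1 hb).add ((hasParity_congr (by omega)).1 hc))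

lemma IsQSPShape.degree_one_sub_sq_add_le {b c : R[X]} (h : IsQSPShape n b c) :
    (1 - (b ^ 2 + (1 - X ^ 2) * c ^ 2)).degree ≤ ↑(2 * n) := by
  refine (degree_sub_le _ _).trans (max_le (degree_one_le.trans (by positivity)) ?_)
  refine (degree_add_le _ _).trans (max_le ?_ ?_)
  · rw [sq, two_mul, Nat.cast_add]
    exact (degree_mul_le _ _).trans (add_le_add h.degree_le h.degree_le)
  · rw [pow_two c, two_mul]
    exact degree_one_sub_X_sq_mul_mul_le h.degree_lt h.degree_lt

end Shape

section QSPPair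

variable {n : ℕ} {P Q : ℂ[X]}

noncomputable def qspNorm (P Q : ℂ[X]) : ℂ[X] :=
  P * P.map conj + (1 - X ^ 2) * (Q * Q.map conj)

structure IsQSPPair (n : ℕ) (P Q : ℂ[X]) : Prop extends IsQSPShape n P Q where
  qspNorm_eq : qspNorm P Q = 1

/-- The action of right multiplication by `Rmat x` on the polynomial pair of a QSP matrix
(see `qspMatrix_mul_Rmat`). -/
noncomputable def signalStep (n : ℕ) (P Q : ℂ[X]) : ℂ[X] × ℂ[X] :=
  (X * P - (-1) ^ n * ((1 - X ^ 2) * Q.map conj), X * Q + (-1) ^ n * P.map conj)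

lemma map_conj_map_conj (p : ℂ[X]) : (p.map conj).map conj = p := by
  simp [Polynomial.map_map]

lemma eval_map_conj (p : ℂ[X]) (x : ℝ) : (p.map conj).eval (x : ℂ) = conj (p.eval (x : ℂ)) := by
  rw [eval_map, ← eval₂_at_apply, conj_ofReal]

lemma eval_qspNorm (P Q : ℂ[X]) (x : ℝ) :
    (qspNorm P Q).eval (x : ℂ) =
      ((normSq (P.eval ↑x) + (1 - x ^ 2) * normSq (Q.eval ↑x) : ℝ) : ℂ) := by
  simp [qspNorm, eval_map_conj, mul_conj]

lemma qspNorm_smul {a : ℂ} (ha : ‖a‖ = 1) (P Q : ℂ[X]) :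
    qspNorm (a • P) (a • Q) = qspNorm P Q := by
  have h : C a * C (conj a) = 1 := by rw [← C_mul, mul_conj', ha]; simp
  simp only [qspNorm, smul_eq_C_mul, Polynomial.map_mul, map_C]
  linear_combination (P * P.map conj + (1 - X ^ 2) * (Q * Q.map conj)) * h

lemma qspNorm_signalStep (n : ℕ) (P Q : ℂ[X]) :
    qspNorm (signalStep n P Q).1 (signalStep n P Q).2 = qspNorm P Q := by
  simp only [qspNorm, signalStep, Polynomial.map_sub, Polynomial.map_add, Polynomial.map_mul,
    Polynomial.map_pow, Polynomial.map_neg, Polynomial.map_one, Polynomial.map_X,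
    map_conj_map_conj]
  linear_combination ((1 - X ^ 2) * (P * P.map conj) + (1 - X ^ 2) ^ 2 * (Q * Q.map conj)) *
    neg_one_pow_sq (R := ℂ[X]) n

lemma signalStep_signalStep (n : ℕ) (P Q : ℂ[X]) :
    signalStep n (signalStep (n + 1) P Q).1 (signalStep (n + 1) P Q).2 = (P, Q) := by
  simp only [signalStep, Polynomial.map_sub, Polynomial.map_add, Polynomial.map_mul,
    Polynomial.map_pow, Polynomial.map_neg, Polynomial.map_one, Polynomial.map_X,
    map_conj_map_conj, Prod.mk.injEq]
  constructor
  · linear_combination (1 - X ^ 2) * P * neg_one_pow_sq (R := ℂ[X]) n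
  · linear_combination (1 - X ^ 2) * Q * neg_one_pow_sq (R := ℂ[X]) n

lemma IsQSPShape.signalStep (h : IsQSPShape n P Q) :
    IsQSPShape (n + 1) (signalStep n P Q).1 (signalStep n P Q).2 where
  degree_le := by
    refine (degree_sub_le _ _).trans (max_le ?_ ?_)
    · rw [mul_comm, degree_mul_X, Nat.cast_add, Nat.cast_one]
      gcongr
      exact h.degree_le
    · rw [degree_neg_one_pow_mul]
      exact degree_one_sub_X_sq_mul_le (by rw [degree_map]; exact h.degree_lt)
  degree_lt := by
    refine (degree_add_le _ _).trans_lt (max_lt ?_ ?_)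
    · rw [mul_comm, degree_mul_X, Nat.cast_add, Nat.cast_one]
      exact WithBot.add_lt_add_right WithBot.one_ne_bot h.degree_lt
    · rw [degree_neg_one_pow_mul, degree_map]
      exact h.degree_le.trans_lt (by norm_cast; omega)
  hasParity_left := by
    refine ((hasParity_congr (by omega)).1 (hasParity_X.mul h.hasParity_left)).sub ?_
    exact (hasParity_congr (by omega)).1
      ((hasParity_one_sub_X_sq.mul (h.hasParity_right.map conj)).neg_one_pow_mul n)
  hasParity_right :=
    ((hasParity_congr (by omega)).1 (hasParity_X.mul h.hasParity_right)).add
      ((hasParity_congr (by omega)).1 ((h.hasParity_left.map conj).neg_one_pow_mul n))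

lemma IsQSPPair.signalStep (h : IsQSPPair n P Q) :
    IsQSPPair (n + 1) (signalStep n P Q).1 (signalStep n P Q).2 where
  toIsQSPShape := h.toIsQSPShape.signalStep
  qspNorm_eq := by rw [qspNorm_signalStep, h.qspNorm_eq]

lemma IsQSPPair.smul {a : ℂ} (ha : ‖a‖ = 1) (h : IsQSPPair n P Q) :
    IsQSPPair n (a • P) (a • Q) where
  toIsQSPShape := h.toIsQSPShape.smul a
  qspNorm_eq := by rw [qspNorm_smul ha, h.qspNorm_eq]

lemma isQSPPair_C_exp (φ : ℝ) : IsQSPPair 0 (C (exp (φ * I))) 0 where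
  toIsQSPShape := isQSPShape_C_zero _
  qspNorm_eq := by
    rw [qspNorm, map_C, ← C_mul, mul_conj', norm_exp_ofReal_mul_I]
    simp

lemma IsQSPPair.norm_coeff_eq (h : IsQSPPair (n + 1) P Q) :
    ‖P.coeff (n + 1)‖ = ‖Q.coeff n‖ := by
  have hP : P.natDegree ≤ n + 1 := natDegree_le_of_degree_le h.degree_le
  have hQ : Q.natDegree ≤ n := natDegree_le_of_degree_le (Order.le_of_lt_succ h.degree_lt)
  have hQQ : (Q * Q.map conj).natDegree < 2 * n + 2 :=
    natDegree_mul_le.trans_lt (by grw [natDegree_map_le, hQ]; omega)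
  have e := congrArg (coeff · (2 * n + 2)) h.qspNorm_eq
  simp only [qspNorm, coeff_add, coeff_one_sub_X_sq_mul, coeff_eq_zero_of_natDegree_lt hQQ] at e
  rw [show 2 * n + 2 = (n + 1) + (n + 1) by ring, show 2 * n = n + n by ring,
    coeff_mul_add_eq_of_natDegree_le hP (natDegree_map_le.trans hP),
    coeff_mul_add_eq_of_natDegree_le hQ (natDegree_map_le.trans hQ)] at e
  simp only [coeff_map, mul_conj', coeff_one, Nat.add_eq_zero_iff, one_ne_zero, and_false,
    if_false] at e
  have : (‖P.coeff (n + 1)‖ : ℂ) ^ 2 = ‖Q.coeff n‖ ^ 2 := by linear_combination e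
  exact (sq_eq_sq₀ (norm_nonneg _) (norm_nonneg _)).mp (by exact_mod_cast this)

lemma IsQSPPair.signalStep_of_coeff (h : IsQSPPair (n + 1) P Q)
    (hc : P.coeff (n + 1) = (-1) ^ n * conj (Q.coeff n)) :
    IsQSPPair n (_root_.signalStep (n + 1) P Q).1 (_root_.signalStep (n + 1) P Q).2 := by
  have hS := h.toIsQSPShape.signalStep
  have hQ : Q.coeff (n + 2) = 0 :=
    coeff_eq_zero_of_degree_lt (h.degree_lt.trans_le (by norm_cast; omega))
  have hP' : (_root_.signalStep (n + 1) P Q).1.degree < ↑(n + 1) := by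
    refine hS.hasParity_left.degree_lt_of_coeff_eq_zero ⟨n + 1, by ring⟩
      (hS.degree_le.trans_lt (by norm_cast; omega)) ?_
    simp only [_root_.signalStep, coeff_sub, coeff_X_mul, coeff_neg_one_pow_mul,
      coeff_one_sub_X_sq_mul, coeff_map, hc, hQ, map_zero]
    ring
  have hQ' : (_root_.signalStep (n + 1) P Q).2.degree < n := by
    refine hS.hasParity_right.degree_lt_of_coeff_eq_zero ⟨n + 1, by ring⟩ hS.degree_lt ?_
    simp only [_root_.signalStep, coeff_add, coeff_X_mul, coeff_neg_one_pow_mul, coeff_map, hc,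
      map_mul, map_pow, map_neg, map_one, conj_conj]
    linear_combination (-(Q.coeff n)) * neg_one_pow_sq (R := ℂ) n
  exact ⟨⟨Order.le_of_lt_succ hP', hQ', (hasParity_congr (by omega)).1 hS.hasParity_left,
    (hasParity_congr (by omega)).1 hS.hasParity_right⟩, by rw [qspNorm_signalStep, h.qspNorm_eq]⟩

lemma exists_exp_neg_mul_eq_exp_mul {u v : ℂ} (h : ‖u‖ = ‖v‖) :
    ∃ φ : ℝ, exp (-(φ * I)) * u = exp (φ * I) * v := by
  refine ⟨(arg u - arg v) / 2, ?_⟩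
  have hu := (norm_mul_exp_arg_mul_I u).symm
  have hv := (norm_mul_exp_arg_mul_I v).symm
  generalize arg u = α at hu ⊢
  generalize arg v = β at hv ⊢
  rw [hu, hv, h, mul_left_comm, ← exp_add, mul_left_comm (exp _), ← exp_add]
  congr 2
  push_cast
  ring

lemma IsQSPPair.exists_eq_smul_signalStep (h : IsQSPPair (n + 1) P Q) :
    ∃ (φ : ℝ) (P' Q' : ℂ[X]), IsQSPPair n P' Q' ∧
      P = exp (φ * I) • (_root_.signalStep n P' Q').1 ∧
      Q = exp (φ * I) • (_root_.signalStep n P' Q').2 := by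
  -- The phase is chosen so that the leading coefficients cancel in the peeled pair.
  obtain ⟨φ, hφ⟩ := exists_exp_neg_mul_eq_exp_mul (u := P.coeff (n + 1))
    (v := (-1) ^ n * conj (Q.coeff n)) (by simp [h.norm_coeff_eq])
  have hconj : conj (exp (-(φ * I))) = exp (φ * I) := by rw [← exp_conj]; simp
  have hpeel := (h.smul (a := exp (-(φ * I))) (by simpa using norm_exp_ofReal_mul_I (-φ)))
    |>.signalStep_of_coeff (by simp only [coeff_smul, smul_eq_mul, map_mul, hconj, hφ]; ring)
  refine ⟨φ, _, _, hpeel, ?_⟩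
  rw [signalStep_signalStep, smul_smul, ← exp_add, smul_smul, ← exp_add]
  simp

lemma IsQSPPair.exists_eq_C_exp (h : IsQSPPair 0 P Q) :
    ∃ φ : ℝ, P = C (exp (φ * I)) ∧ Q = 0 := by
  have hQ : Q = 0 := by simpa using h.degree_lt
  obtain ⟨c, rfl⟩ : ∃ c, P = C c := ⟨_, eq_C_of_degree_le_zero h.degree_le⟩
  have hc : ‖c‖ = 1 := by
    have := h.qspNorm_eq
    simp only [qspNorm, hQ, map_C, ← C_mul, mul_conj', Polynomial.map_zero, mul_zero, add_zero,
      ← C_1, C_inj] at this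
    exact (pow_eq_one_iff_of_nonneg (norm_nonneg c) two_ne_zero).mp (by exact_mod_cast this)
  refine ⟨arg c, ?_, hQ⟩
  conv_lhs => rw [← norm_mul_exp_arg_mul_I c, hc]
  simp

end QSPPair

section QSPMatrix

variable {n : ℕ} {P Q : ℂ[X]}

noncomputable def qspMatrix (n : ℕ) (P Q : ℂ[X]) (x : ℝ) : Matrix (Fin 2) (Fin 2) ℂ :=
  !![P.eval ↑x, -(-1) ^ n * conj (Q.eval ↑x) * (Real.sqrt (1 - x ^ 2) : ℂ);
     Q.eval ↑x * (Real.sqrt (1 - x ^ 2) : ℂ), (-1) ^ n * conj (P.eval ↑x)]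

lemma qspMatrix_zero_one_zero (x : ℝ) : qspMatrix 0 1 0 x = 1 := by
  ext i j; fin_cases i <;> fin_cases j <;> simp [qspMatrix]

lemma qspMatrix_mul_phaseMat (P Q : ℂ[X]) (x φ : ℝ) :
    qspMatrix n P Q x * phaseMat φ = qspMatrix n (exp (φ * I) • P) (exp (φ * I) • Q) x := by
  have h : conj (exp (φ * I)) = exp (-(φ * I)) := by rw [← exp_conj]; simp
  ext i j; fin_cases i <;> fin_cases j <;> simp [qspMatrix, phaseMat, Matrix.mul_apply, h] <;> ring

lemma qspMatrix_mul_Rmat (P Q : ℂ[X]) {x : ℝ} (hx : x ∈ Set.Icc (-1 : ℝ) 1) :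
    qspMatrix n P Q x * Rmat x =
      qspMatrix (n + 1) (signalStep n P Q).1 (signalStep n P Q).2 x := by
  have hs : ((Real.sqrt (1 - x ^ 2) : ℝ) : ℂ) ^ 2 = 1 - (x : ℂ) ^ 2 := by
    rw [← ofReal_pow, Real.sq_sqrt (by nlinarith [hx.1, hx.2])]; push_cast; ring
  have hσ := neg_one_pow_sq (R := ℂ) n
  ext i j; fin_cases i <;> fin_cases j <;>
    simp [qspMatrix, Rmat, signalStep, Matrix.mul_apply, eval_map_conj]
  · linear_combination (-(-1) ^ n * conj (Q.eval (x : ℂ))) * hs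
  · linear_combination (-P.eval (x : ℂ) * Real.sqrt (1 - x ^ 2)) * hσ
  · ring
  · linear_combination Q.eval (x : ℂ) * hs - (1 - (x : ℂ) ^ 2) * Q.eval (x : ℂ) * hσ

lemma QSP_zero (Φ : ℕ → ℝ) (x : ℝ) : QSP 0 Φ x = phaseMat (Φ 0) := by
  simp [QSP]

lemma QSP_succ (n : ℕ) (Φ : ℕ → ℝ) (x : ℝ) :
    QSP (n + 1) Φ x = QSP n Φ x * (Rmat x * phaseMat (Φ (n + 1))) := by
  rw [QSP, QSP, List.range_succ, List.map_append, List.prod_append]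
  simp [Matrix.mul_assoc]

lemma QSP_congr {Φ Ψ : ℕ → ℝ} (h : ∀ j ≤ n, Φ j = Ψ j) (x : ℝ) : QSP n Φ x = QSP n Ψ x := by
  rw [QSP, QSP, h 0 n.zero_le]
  congr 2
  refine List.map_congr_left fun j hj ↦ ?_
  rw [h (j + 1) (List.mem_range.mp hj)]

lemma QSP_zero_eq_qspMatrix (Φ : ℕ → ℝ) (x : ℝ) :
    QSP 0 Φ x = qspMatrix 0 (C (exp (Φ 0 * I))) 0 x := by
  rw [QSP_zero, ← one_mul (phaseMat _), ← qspMatrix_zero_one_zero x, qspMatrix_mul_phaseMat,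
    smul_zero, smul_eq_C_mul, mul_one]

lemma QSP_succ_eq_qspMatrix {Φ : ℕ → ℝ} {x : ℝ} (hx : x ∈ Set.Icc (-1 : ℝ) 1)
    (h : QSP n Φ x = qspMatrix n P Q x) :
    QSP (n + 1) Φ x = qspMatrix (n + 1) (exp (Φ (n + 1) * I) • (signalStep n P Q).1)
      (exp (Φ (n + 1) * I) • (signalStep n P Q).2) x := by
  rw [QSP_succ, h, ← Matrix.mul_assoc, qspMatrix_mul_Rmat _ _ hx, qspMatrix_mul_phaseMat]

theorem exists_isQSPPair_QSP_eq (n : ℕ) (Φ : ℕ → ℝ) :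
    ∃ P Q, IsQSPPair n P Q ∧ ∀ x ∈ Set.Icc (-1 : ℝ) 1, QSP n Φ x = qspMatrix n P Q x := by
  induction n with
  | zero => exact ⟨_, _, isQSPPair_C_exp (Φ 0), fun x _ ↦ QSP_zero_eq_qspMatrix Φ x⟩
  | succ n ih =>
    obtain ⟨P, Q, hPQ, hQSP⟩ := ih
    exact ⟨_, _, hPQ.signalStep.smul (norm_exp_ofReal_mul_I _),
      fun x hx ↦ QSP_succ_eq_qspMatrix hx (hQSP x hx)⟩

theorem IsQSPPair.exists_QSP_eq (h : IsQSPPair n P Q) :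
    ∃ Φ : ℕ → ℝ, ∀ x ∈ Set.Icc (-1 : ℝ) 1, QSP n Φ x = qspMatrix n P Q x := by
  induction n generalizing P Q with
  | zero =>
    obtain ⟨φ, rfl, rfl⟩ := h.exists_eq_C_exp
    exact ⟨fun _ ↦ φ, fun x _ ↦ QSP_zero_eq_qspMatrix _ x⟩
  | succ n ih =>
    obtain ⟨φ, P', Q', h', rfl, rfl⟩ := h.exists_eq_smul_signalStep
    obtain ⟨Φ, hΦ⟩ := ih h'
    refine ⟨Function.update Φ (n + 1) φ, fun x hx ↦ ?_⟩
    have hΦ' : QSP n (Function.update Φ (n + 1) φ) x = qspMatrix n P' Q' x := by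
      rw [QSP_congr (Ψ := Φ) (fun j hj ↦ Function.update_of_ne (by omega) _ _), hΦ x hx]
    rw [QSP_succ_eq_qspMatrix hx hΦ', Function.update_self]

lemma eq_of_eval_ofReal_eq_on_Ioo {p q : ℂ[X]}
    (h : ∀ x ∈ Set.Ioo (-1 : ℝ) 1, p.eval (x : ℂ) = q.eval (x : ℂ)) : p = q := by
  refine eq_of_infinite_eval_eq p q <|
    ((Set.Ioo_infinite (by norm_num : (-1 : ℝ) < 1)).image ofReal_injective.injOn).mono ?_
  rintro _ ⟨x, hx, rfl⟩
  exact h x hx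

theorem exists_QSP_entries_iff_isQSPPair (n : ℕ) (p q : ℂ[X]) :
    (∃ Φ : ℕ → ℝ, ∀ x : ℝ, x ∈ Set.Icc (-1 : ℝ) 1 →
      (QSP n Φ x) 0 0 = p.eval (x : ℂ) ∧
      (QSP n Φ x) 1 0 = q.eval (x : ℂ) * (Real.sqrt (1 - x ^ 2) : ℂ)) ↔ IsQSPPair n p q := by
  constructor
  · rintro ⟨Φ, hΦ⟩
    obtain ⟨P, Q, hPQ, hQSP⟩ := exists_isQSPPair_QSP_eq n Φ
    have hentries : ∀ x ∈ Set.Ioo (-1 : ℝ) 1, p.eval (x : ℂ) = P.eval (x : ℂ) ∧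
        q.eval (x : ℂ) = Q.eval (x : ℂ) := by
      intro x hx
      have hs : (Real.sqrt (1 - x ^ 2) : ℂ) ≠ 0 :=
        ofReal_ne_zero.mpr (Real.sqrt_pos.mpr (by nlinarith [hx.1, hx.2])).ne'
      obtain ⟨h00, h10⟩ := hΦ x (Set.Ioo_subset_Icc_self hx)
      rw [hQSP x (Set.Ioo_subset_Icc_self hx)] at h00 h10
      simp only [qspMatrix, Matrix.of_apply, Matrix.cons_val', Matrix.cons_val_zero,
        Matrix.cons_val_one, Matrix.empty_val', Matrix.cons_val_fin_one] at h00 h10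
      exact ⟨h00.symm, mul_right_cancel₀ hs h10.symm⟩
    rwa [eq_of_eval_ofReal_eq_on_Ioo fun x hx ↦ (hentries x hx).1,
      eq_of_eval_ofReal_eq_on_Ioo fun x hx ↦ (hentries x hx).2]
  · intro h
    obtain ⟨Φ, hΦ⟩ := h.exists_QSP_eq
    exact ⟨Φ, fun x hx ↦ by simp [hΦ x hx, qspMatrix]⟩

end QSPMatrix

section Lukacs

variable {m n : ℕ} {A B E : ℝ[X]}

def IsQSPSumSq (n : ℕ) (A : ℝ[X]) : Prop :=
  ∃ b c : ℝ[X], IsQSPShape n b c ∧ A = b ^ 2 + (1 - X ^ 2) * c ^ 2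

/-- By `(b₁² + w c₁²)(b₂² + w c₂²) = (b₁b₂ - w c₁c₂)² + w (b₁c₂ + c₁b₂)²` with `w = 1 - X²`. -/
lemma IsQSPSumSq.mul (hA : IsQSPSumSq m A) (hB : IsQSPSumSq n B) :
    IsQSPSumSq (m + n) (A * B) := by
  obtain ⟨b₁, c₁, h₁, rfl⟩ := hA
  obtain ⟨b₂, c₂, h₂, rfl⟩ := hB
  exact ⟨_, _, h₁.mul h₂, by ring⟩

lemma isQSPSumSq_C {a : ℝ} (ha : 0 ≤ a) : IsQSPSumSq 0 (C a) :=
  ⟨C (Real.sqrt a), 0, isQSPShape_C_zero _, by rw [← C_pow, Real.sq_sqrt ha]; ring⟩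

lemma isQSPSumSq_one (n : ℕ) : IsQSPSumSq n 1 := by
  induction n with
  | zero => simpa using isQSPSumSq_C zero_le_one
  | succ n ih => simpa using ih.mul ⟨C 1 * X, C 1, isQSPShape_C_mul_X_C 1 1, by simp⟩

lemma IsQSPSumSq.mono (hA : IsQSPSumSq m A) (hmn : m ≤ n) : IsQSPSumSq n A := by
  simpa [Nat.add_sub_cancel' hmn] using hA.mul (isQSPSumSq_one (n - m))

lemma isQSPSumSq_expand_X_sub_C {r : ℝ} (hr : r ≤ 0) :
    IsQSPSumSq 1 (expand ℝ 2 (X - C r)) := by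
  refine ⟨C (Real.sqrt (1 - r)) * X, C (Real.sqrt (-r)), isQSPShape_C_mul_X_C _ _, ?_⟩
  have h₁ : C (Real.sqrt (1 - r)) ^ 2 = 1 - C r := by
    rw [← C_pow, Real.sq_sqrt (by linarith), C_sub, C_1]
  have h₂ : C (Real.sqrt (-r)) ^ 2 = -C r := by rw [← C_pow, Real.sq_sqrt (by linarith), C_neg]
  simp only [map_sub, expand_X, expand_C]
  linear_combination (-X ^ 2 : ℝ[X]) * h₁ - (1 - X ^ 2) * h₂

lemma isQSPSumSq_expand_C_sub_X {r : ℝ} (hr : 1 ≤ r) :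
    IsQSPSumSq 1 (expand ℝ 2 (C r - X)) := by
  refine ⟨C (Real.sqrt (r - 1)) * X, C (Real.sqrt r), isQSPShape_C_mul_X_C _ _, ?_⟩
  have h₁ : C (Real.sqrt (r - 1)) ^ 2 = C r - 1 := by
    rw [← C_pow, Real.sq_sqrt (by linarith), C_sub, C_1]
  have h₂ : C (Real.sqrt r) ^ 2 = C r := by rw [← C_pow, Real.sq_sqrt (by linarith)]
  simp only [map_sub, expand_X, expand_C]
  linear_combination (-X ^ 2 : ℝ[X]) * h₁ - (1 - X ^ 2) * h₂

lemma isQSPSumSq_expand_X_sub_C_sq (r : ℝ) : IsQSPSumSq 2 (expand ℝ 2 ((X - C r) ^ 2)) :=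
  ⟨C 1 * X ^ 2 + C (-r), C 0 * X, isQSPShape_C_mul_X_sq_add_C _ _ _, by simp; ring⟩

lemma isQSPSumSq_expand_quadratic {s t : ℝ} (h : s ^ 2 < t) :
    IsQSPSumSq 2 (expand ℝ 2 (X ^ 2 - C (2 * s) * X + C t)) := by
  -- Matching `(αX² + β)² + (1 - X²)(γX)²` with `X⁴ - 2sX² + t` means `β² = t`, `α² - γ² = 1` and
  -- `2αβ + γ² = -2s`, which is solved by `α = -(β + τ)` with `τ² = t + 1 - 2s`.
  have ht : 0 ≤ t := by nlinarith [sq_nonneg s]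
  have hu : 0 ≤ t + 1 - 2 * s := by nlinarith [sq_nonneg (s - 1)]
  set β := Real.sqrt t
  set τ := Real.sqrt (t + 1 - 2 * s)
  have hβ : β ^ 2 = t := Real.sq_sqrt ht
  have hτ : τ ^ 2 = t + 1 - 2 * s := Real.sq_sqrt hu
  have hv : 0 ≤ t - s + β * τ := by
    nlinarith [mul_nonneg (Real.sqrt_nonneg t) (Real.sqrt_nonneg (t + 1 - 2 * s)),
      sq_nonneg (β * τ + (t - s)), sq_nonneg (β * τ - (t - s))]
  set γ := Real.sqrt (2 * (t - s + β * τ))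
  have hγ : γ ^ 2 = 2 * (t - s + β * τ) := Real.sq_sqrt (by linarith)
  refine ⟨C (-(β + τ)) * X ^ 2 + C β, C γ * X, isQSPShape_C_mul_X_sq_add_C _ _ _, ?_⟩
  have e₁ : C β ^ 2 = C t := by rw [← C_pow, hβ]
  have e₂ : C τ ^ 2 = C t + 1 - 2 * C s := by
    rw [← C_pow, hτ]; simp only [map_sub, map_add, map_mul, map_one, map_ofNat]
  have e₃ : C γ ^ 2 = 2 * (C t - C s + C β * C τ) := by
    rw [← C_pow, hγ]; simp only [map_sub, map_add, map_mul, map_ofNat]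
  simp only [map_add, map_sub, map_mul, map_pow, map_neg, map_ofNat, expand_X, expand_C]
  linear_combination (-X ^ 4 + 2 * X ^ 2 - 1 : ℝ[X]) * e₁ - X ^ 4 * e₂ + (X ^ 4 - X ^ 2) * e₃

lemma exists_factor_of_isRoot_of_nonpos (hE : ∀ y ∈ Set.Ioo (0 : ℝ) 1, 0 ≤ E.eval y) {r : ℝ}
    (hr : E.IsRoot r) (hr0 : r ≤ 0) :
    ∃ F G : ℝ[X], E = F * G ∧ 0 < F.natDegree ∧ IsQSPSumSq F.natDegree (expand ℝ 2 F) ∧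
      ∀ y ∈ Set.Ioo (0 : ℝ) 1, 0 ≤ G.eval y := by
  obtain ⟨G, rfl⟩ := dvd_iff_isRoot.mpr hr
  refine ⟨X - C r, G, rfl, by rw [natDegree_X_sub_C]; exact one_pos,
    by rw [natDegree_X_sub_C]; exact isQSPSumSq_expand_X_sub_C hr0, fun y hy ↦ ?_⟩
  exact nonneg_of_mul_nonneg_right (by simpa using hE y hy) (by linarith [hy.1])

lemma exists_factor_of_isRoot_of_one_le (hE : ∀ y ∈ Set.Ioo (0 : ℝ) 1, 0 ≤ E.eval y) {r : ℝ}
    (hr : E.IsRoot r) (hr1 : 1 ≤ r) :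
    ∃ F G : ℝ[X], E = F * G ∧ 0 < F.natDegree ∧ IsQSPSumSq F.natDegree (expand ℝ 2 F) ∧
      ∀ y ∈ Set.Ioo (0 : ℝ) 1, 0 ≤ G.eval y := by
  obtain ⟨G, rfl⟩ := dvd_iff_isRoot.mpr hr
  have hdeg : (C r - X).natDegree = 1 := by rw [← neg_sub, natDegree_neg, natDegree_X_sub_C]
  refine ⟨C r - X, -G, by ring, by rw [hdeg]; exact one_pos,
    by rw [hdeg]; exact isQSPSumSq_expand_C_sub_X hr1, fun y hy ↦ ?_⟩
  have h := hE y hy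
  simp only [eval_mul, eval_sub, eval_X, eval_C] at h
  rw [eval_neg]
  exact nonneg_of_mul_nonneg_right (a := r - y) (by linarith) (by linarith [hy.2])

lemma exists_factor_of_isRoot_of_mem_Ioo (hE : ∀ y ∈ Set.Ioo (0 : ℝ) 1, 0 ≤ E.eval y) {r : ℝ}
    (hr : E.IsRoot r) (hr01 : r ∈ Set.Ioo (0 : ℝ) 1) :
    ∃ F G : ℝ[X], E = F * G ∧ 0 < F.natDegree ∧ IsQSPSumSq F.natDegree (expand ℝ 2 F) ∧
      ∀ y ∈ Set.Ioo (0 : ℝ) 1, 0 ≤ G.eval y := by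
  obtain ⟨G₁, rfl⟩ := dvd_iff_isRoot.mpr hr
  -- `E` cannot change sign at the interior root `r`, so `r` is a double root.
  have hG₁ : G₁.IsRoot r := by
    have h₁ := eval_nonneg_on_Icc_of_Ioo G₁ hr01.2 (fun y hy ↦ nonneg_of_mul_nonneg_right
      (by simpa using hE y ⟨hr01.1.trans hy.1, hy.2⟩) (by linarith [hy.1])) r ⟨le_rfl, hr01.2.le⟩
    have h₂ := eval_nonneg_on_Icc_of_Ioo (-G₁) hr01.1 (fun y hy ↦ nonneg_of_mul_nonneg_right
      (a := r - y) (by have := hE y ⟨hy.1, hy.2.trans hr01.2⟩; simp at this ⊢; linarith)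
      (by linarith [hy.2])) r ⟨hr01.1.le, le_rfl⟩
    exact le_antisymm (by simpa using h₂) h₁
  obtain ⟨G, rfl⟩ := dvd_iff_isRoot.mpr hG₁
  have hG : ∀ y ∈ Set.Ioo (0 : ℝ) 1, y ≠ r → 0 ≤ G.eval y := fun y hy hyr ↦
    nonneg_of_mul_nonneg_right (a := (y - r) ^ 2) (by simpa [sq, mul_assoc] using hE y hy)
      (by positivity [sub_ne_zero.mpr hyr])
  have hdeg : ((X - C r) ^ 2).natDegree = 2 := by rw [natDegree_pow, natDegree_X_sub_C]
  refine ⟨(X - C r) ^ 2, G, by ring, by rw [hdeg]; exact two_pos,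
    by rw [hdeg]; exact isQSPSumSq_expand_X_sub_C_sq r, fun y hy ↦ ?_⟩
  obtain rfl | hyr := eq_or_ne y r
  · exact eval_nonneg_on_Icc_of_Ioo G hr01.2
      (fun z hz ↦ hG z ⟨hr01.1.trans hz.1, hz.2⟩ hz.1.ne') y ⟨le_rfl, hr01.2.le⟩
  · exact hG y hy hyr

lemma exists_factor_of_aeval_eq_zero (hE : ∀ y ∈ Set.Ioo (0 : ℝ) 1, 0 ≤ E.eval y) {z : ℂ}
    (hz : aeval z E = 0) (him : z.im ≠ 0) :
    ∃ F G : ℝ[X], E = F * G ∧ 0 < F.natDegree ∧ IsQSPSumSq F.natDegree (expand ℝ 2 F) ∧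
      ∀ y ∈ Set.Ioo (0 : ℝ) 1, 0 ≤ G.eval y := by
  obtain ⟨G, rfl⟩ := E.quadratic_dvd_of_aeval_eq_zero_im_ne_zero hz him
  have hlt : z.re ^ 2 < ‖z‖ ^ 2 := by
    rw [Complex.sq_norm, Complex.normSq_apply]; nlinarith [sq_pos_of_ne_zero him]
  have hpos : ∀ y : ℝ, 0 < (X ^ 2 - C (2 * z.re) * X + C (‖z‖ ^ 2)).eval y := fun y ↦ by
    simp only [eval_add, eval_sub, eval_mul, eval_pow, eval_X, eval_C]
    nlinarith [sq_nonneg (y - z.re)]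
  have hdeg : (X ^ 2 - C (2 * z.re) * X + C (‖z‖ ^ 2)).natDegree = 2 := by compute_degree!
  refine ⟨_, G, rfl, by rw [hdeg]; norm_num, by rw [hdeg]; exact isQSPSumSq_expand_quadratic hlt,
    fun y hy ↦ nonneg_of_mul_nonneg_right (by simpa using hE y hy) (hpos y)⟩

lemma exists_factor_of_nonneg (hE : ∀ y ∈ Set.Ioo (0 : ℝ) 1, 0 ≤ E.eval y) (hd : 0 < E.natDegree) :
    ∃ F G : ℝ[X], E = F * G ∧ 0 < F.natDegree ∧ IsQSPSumSq F.natDegree (expand ℝ 2 F) ∧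
      ∀ y ∈ Set.Ioo (0 : ℝ) 1, 0 ≤ G.eval y := by
  obtain ⟨z, hz⟩ := IsAlgClosed.exists_aeval_eq_zero ℂ E (natDegree_pos_iff_degree_pos.mp hd).ne'
  by_cases him : z.im = 0
  · have hr : E.IsRoot z.re := by
      rw [show z = algebraMap ℝ ℂ z.re from Complex.ext rfl (by simp [him]),
        aeval_algebraMap_apply_eq_algebraMap_eval] at hz
      exact Complex.ofReal_eq_zero.mp hz
    rcases le_or_gt z.re 0 with h0 | h0
    · exact exists_factor_of_isRoot_of_nonpos hE hr h0
    rcases le_or_gt 1 z.re with h1 | h1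
    · exact exists_factor_of_isRoot_of_one_le hE hr h1
    · exact exists_factor_of_isRoot_of_mem_Ioo hE hr ⟨h0, h1⟩
  · exact exists_factor_of_aeval_eq_zero hE hz him

theorem isQSPSumSq_expand_of_nonneg {d : ℕ} (hd : E.natDegree ≤ d)
    (hE : ∀ y ∈ Set.Ioo (0 : ℝ) 1, 0 ≤ E.eval y) : IsQSPSumSq d (expand ℝ 2 E) := by
  induction d using Nat.strong_induction_on generalizing E with
  | _ d ih =>
  rcases Nat.eq_zero_or_pos E.natDegree with h0 | hpos
  · rw [eq_C_of_natDegree_eq_zero h0, expand_C]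
    refine (isQSPSumSq_C ?_).mono d.zero_le
    have h := hE (1 / 2) ⟨by norm_num, by norm_num⟩
    rwa [eq_C_of_natDegree_eq_zero h0, eval_C] at h
  obtain ⟨F, G, rfl, hF, hFsq, hG⟩ := exists_factor_of_nonneg hE hpos
  have hFG : (F * G).natDegree = F.natDegree + G.natDegree :=
    natDegree_mul (by rintro rfl; simp at hF) (by rintro rfl; simp at hpos)
  rw [map_mul]
  exact (hFsq.mul (ih (d - F.natDegree) (by omega) (by omega) hG)).mono (by omega)

end Lukacs

section RealPart

variable {m n : ℕ} {p : ℂ[X]} {f pRe qRe : ℝ[X]}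

lemma re_eval_ofReal (h : ∀ k, (p.coeff k).re = f.coeff k) (x : ℝ) :
    (p.eval (x : ℂ)).re = f.eval x := by
  set N := max p.natDegree f.natDegree + 1
  rw [eval_eq_sum_range' (by omega : p.natDegree < N),
    eval_eq_sum_range' (by omega : f.natDegree < N), re_sum]
  refine Finset.sum_congr rfl fun i _ ↦ ?_
  rw [← ofReal_pow, re_mul_ofReal, h]

lemma Polynomial.HasParity.of_re (hp : HasParity m p) (h : ∀ k, (p.coeff k).re = f.coeff k) :
    HasParity m f :=
  hasParity_iff_eval_neg.mpr fun x ↦ by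
    rw [← re_eval_ofReal h, ← re_eval_ofReal h, ofReal_neg, hp.eval_neg,
      show (-1 : ℂ) ^ m = ((-1 : ℝ) ^ m : ℝ) by push_cast; rfl, re_ofReal_mul]

lemma exists_expand_two_eq {A : ℝ[X]} (hA : HasParity 0 A) : ∃ E, expand ℝ 2 E = A := by
  refine ⟨contract 2 A, ext fun k ↦ ?_⟩
  rw [coeff_expand two_pos, coeff_contract two_ne_zero]
  split_ifs with hk
  · rw [Nat.div_mul_cancel hk]
  · exact (hA.coeff_eq_zero (by simpa [Nat.odd_iff] using hk)).symm

lemma qspNorm_map_ofReal_add_I_smul (a b c d : ℝ[X]) :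
    qspNorm (a.map ofRealHom + I • b.map ofRealHom) (c.map ofRealHom + I • d.map ofRealHom) =
      (a ^ 2 + b ^ 2 + (1 - X ^ 2) * (c ^ 2 + d ^ 2)).map ofRealHom := by
  have hconj : ∀ g : ℝ[X], (g.map ofRealHom).map conj = g.map ofRealHom := fun g ↦ by
    rw [Polynomial.map_map]; congr 1; ext r; simp
  have hI : C I ^ 2 = -1 := by rw [← C_pow, I_sq, C_neg, C_1]
  simp only [qspNorm, smul_eq_C_mul, Polynomial.map_add, Polynomial.map_mul, Polynomial.map_pow,
    Polynomial.map_sub, Polynomial.map_one, Polynomial.map_X, map_C, hconj, conj_I, C_neg]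
  linear_combination (-(b.map ofRealHom) ^ 2 - (1 - X ^ 2) * (d.map ofRealHom) ^ 2) * hI

lemma IsQSPPair.re_sq_add_le_one {p q : ℂ[X]} (h : IsQSPPair n p q)
    (hp : ∀ k, (p.coeff k).re = pRe.coeff k) (hq : ∀ k, (q.coeff k).re = qRe.coeff k)
    {x : ℝ} (hx : x ∈ Set.Icc (-1 : ℝ) 1) :
    pRe.eval x ^ 2 + (1 - x ^ 2) * qRe.eval x ^ 2 ≤ 1 := by
  have hnorm := eval_qspNorm p q x
  rw [h.qspNorm_eq, eval_one, ← ofReal_one, ofReal_inj] at hnorm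
  rw [← re_eval_ofReal hp, ← re_eval_ofReal hq]
  have h1x : 0 ≤ 1 - x ^ 2 := by nlinarith [hx.1, hx.2]
  nlinarith [re_sq_le_normSq (p.eval (x : ℂ)), re_sq_le_normSq (q.eval (x : ℂ)),
    mul_le_mul_of_nonneg_left (re_sq_le_normSq (q.eval (x : ℂ))) h1x]

lemma IsQSPShape.isQSPSumSq_one_sub (h : IsQSPShape n pRe qRe)
    (hnorm : ∀ x ∈ Set.Icc (-1 : ℝ) 1, pRe.eval x ^ 2 + (1 - x ^ 2) * qRe.eval x ^ 2 ≤ 1) :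
    IsQSPSumSq n (1 - (pRe ^ 2 + (1 - X ^ 2) * qRe ^ 2)) := by
  obtain ⟨E, hE⟩ := exists_expand_two_eq h.hasParity_one_sub_sq_add
  rw [← hE]
  refine isQSPSumSq_expand_of_nonneg ?_ fun y hy ↦ ?_
  · have := natDegree_le_of_degree_le h.degree_one_sub_sq_add_le
    rw [← hE, natDegree_expand] at this
    omega
  · have hsqrt : Real.sqrt y ∈ Set.Icc (-1 : ℝ) 1 :=
      ⟨by linarith [Real.sqrt_nonneg y], Real.sqrt_le_one.mpr hy.2.le⟩
    have := hnorm _ hsqrt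
    rw [← Real.sq_sqrt hy.1.le, ← expand_eval, hE]
    simp only [eval_sub, eval_add, eval_mul, eval_pow, eval_one, eval_X]
    linarith

theorem exists_isQSPPair_re_iff (hp : pRe.degree ≤ n) :
    (∃ p q : ℂ[X], (∀ k, (p.coeff k).re = pRe.coeff k) ∧ (∀ k, (q.coeff k).re = qRe.coeff k) ∧
      IsQSPPair n p q) ↔
    qRe.degree < n ∧ (HasParity n pRe ∧ HasParity (n + 1) qRe) ∧
      ∀ x ∈ Set.Icc (-1 : ℝ) 1, pRe.eval x ^ 2 + (1 - x ^ 2) * qRe.eval x ^ 2 ≤ 1 := by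
  constructor
  · rintro ⟨p, q, hpre, hqre, h⟩
    refine ⟨(degree_lt_iff_coeff_zero _ _).mpr fun k hk ↦ ?_,
      ⟨h.hasParity_left.of_re hpre, h.hasParity_right.of_re hqre⟩,
      fun x hx ↦ h.re_sq_add_le_one hpre hqre hx⟩
    rw [← hqre, coeff_eq_zero_of_degree_lt (h.degree_lt.trans_le (by exact_mod_cast hk)), zero_re]
  · rintro ⟨hq, ⟨hpp, hqp⟩, hnorm⟩
    have hshape : IsQSPShape n pRe qRe := ⟨hp, hq, hpp, hqp⟩
    obtain ⟨b, c, hbc, hbcA⟩ := hshape.isQSPSumSq_one_sub hnorm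
    refine ⟨pRe.map ofRealHom + I • b.map ofRealHom, qRe.map ofRealHom + I • c.map ofRealHom,
      fun k ↦ by simp, fun k ↦ by simp,
      ⟨(hshape.map ofRealHom).add ((hbc.map ofRealHom).smul I), ?_⟩⟩
    rw [qspNorm_map_ofReal_add_I_smul, ← Polynomial.map_one ofRealHom]
    congr 1
    linear_combination -hbcA

end RealPart

lemma even_odd_iff_hasParity {n : ℕ} {pRe qRe : ℝ[X]} (hp : pRe.degree = n) :
    (((∀ x : ℝ, pRe.eval (-x) = pRe.eval x) ∧ (∀ x : ℝ, qRe.eval (-x) = -qRe.eval x)) ∨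
      ((∀ x : ℝ, pRe.eval (-x) = -pRe.eval x) ∧ (∀ x : ℝ, qRe.eval (-x) = qRe.eval x))) ↔
    HasParity n pRe ∧ HasParity (n + 1) qRe := by
  have hmod : ∀ m, HasParity m pRe → n % 2 = m % 2 := fun m hm ↦ by
    by_contra hne
    exact coeff_ne_zero_of_eq_degree hp (hm.coeff_eq_zero (Nat.odd_iff.mpr (by omega)))
  have h₀ : ∀ f : ℝ[X], (∀ x, f.eval (-x) = f.eval x) ↔ HasParity 0 f := fun f ↦ by
    simp [hasParity_iff_eval_neg]
  have h₁ : ∀ f : ℝ[X], (∀ x, f.eval (-x) = -f.eval x) ↔ HasParity 1 f := fun f ↦ by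
    simp [hasParity_iff_eval_neg]
  simp only [h₀, h₁]
  rcases Nat.mod_two_eq_zero_or_one n with hn | hn
  · rw [hasParity_congr (p := pRe) (m := 0) (n := n) (by omega),
      hasParity_congr (p := qRe) (m := 1) (n := n + 1) (by omega)]
    exact ⟨fun h ↦ h.resolve_right fun h' ↦ by have := hmod 1 (h'.1); omega, Or.inl⟩
  · rw [hasParity_congr (p := pRe) (m := 1) (n := n) (by omega),
      hasParity_congr (p := qRe) (m := 0) (n := n + 1) (by omega)]
    exact ⟨fun h ↦ h.resolve_left fun h' ↦ by have := hmod 0 (h'.1); omega, Or.inr⟩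

/-- **Real characterization of QSP-achievable pairs** (Theorem A.3). Real
polynomials `p_Re, q_Re` arise as the coefficient-wise real parts of a
QSP-achievable pair `(p, q)` iff `deg q_Re ≤ n - 1`, the pair has parities
(even, odd) or (odd, even), and `p_Re(x)² + (1 - x²) q_Re(x)² ≤ 1` on `[-1, 1]`. -/
theorem qsp_real_characterization (n : ℕ) (pRe qRe : Polynomial ℝ) (hp : pRe.degree = n) :
    (∃ (p q : Polynomial ℂ) (Φ : ℕ → ℝ),
      (∀ k, (p.coeff k).re = pRe.coeff k) ∧
      (∀ k, (q.coeff k).re = qRe.coeff k) ∧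
      (∀ x : ℝ, x ∈ Set.Icc (-1 : ℝ) 1 →
        (QSP n Φ x) 0 0 = p.eval (x : ℂ) ∧
        (QSP n Φ x) 1 0 = q.eval (x : ℂ) * (Real.sqrt (1 - x ^ 2) : ℂ))) ↔
    (qRe.degree < n ∧
      (((∀ x : ℝ, pRe.eval (-x) = pRe.eval x) ∧ (∀ x : ℝ, qRe.eval (-x) = -qRe.eval x)) ∨
       ((∀ x : ℝ, pRe.eval (-x) = -pRe.eval x) ∧ (∀ x : ℝ, qRe.eval (-x) = qRe.eval x))) ∧
      (∀ x : ℝ, x ∈ Set.Icc (-1 : ℝ) 1 →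
        pRe.eval x ^ 2 + (1 - x ^ 2) * qRe.eval x ^ 2 ≤ 1)) := by
  rw [even_odd_iff_hasParity hp, ← exists_isQSPPair_re_iff hp.le]
  simp only [← exists_QSP_entries_iff_isQSPPair, exists_and_left]
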